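/- For the longest element of the Weyl groupoid of a connected generalized root system ending at object a: if n := |R^+(a)| < ∞ and f: {1,…,n} → I satisfies 1^a σ_{f,n} = ω_0^{R,a} (the unique morphism into a of length n), then R^+(a) = { 1^a s_{f,t-1}(α^{a_{f,t-1}}_{f(t)}) : t ∈ {1,…,n} }. -/
import Mathlib


/-- A Cartan scheme `C(I, A, (τ_i), (C^a))`. -/
structure CartanScheme (I : Type*) [Fintype I] [DecidableEq I] (A : Type*) where
  τ : I → A → A
  c : A → I → I → ℤ
  c_diag : ∀ a i, c a i i = 2
  c_nonpos : ∀ a i j, i ≠ j → c a i j ≤ 0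
  c_zero_iff : ∀ a i j, i ≠ j → (c a i j = 0 ↔ c a j i = 0)
  τ_invol : ∀ i a, τ i (τ i a) = a
  c_invar : ∀ i a j, c (τ i a) i j = c a i j

namespace CartanScheme

variable {I : Type*} [Fintype I] [DecidableEq I] {A : Type*} (cs : CartanScheme I A)

/-- The map `s^a_i : V^a → V^{τ_i(a)}`, `α^a_j ↦ α^{τ_i(a)}_j − c^a_{ij} α^{τ_i(a)}_i`,
written in the coordinates given by the bases `Π^a`, `Π^{τ_i(a)}`. -/
def sref (a : A) (i : I) (v : I → ℤ) : I → ℤ :=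
  fun l => v l - (if l = i then ∑ j, cs.c a i j * v j else 0)

/-- `a_{f,t}`: the iterated images `a_{f,0} = a`, `a_{f,t} = τ_{f(t)}(a_{f,t-1})`. -/
def obj (a : A) (f : ℕ → I) : ℕ → A
  | 0 => a
  | t + 1 => cs.τ (f (t + 1)) (obj a f t)

/-- `1^a s_{f,t} : V^{a_{f,t}} → V^a`, defined by `1^a s_{f,0} = id` and
`1^a s_{f,t} = 1^a s_{f,t-1} ∘ s^{a_{f,t}}_{f(t)}`. -/
def wmap (a : A) (f : ℕ → I) : ℕ → (I → ℤ) → (I → ℤ)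
  | 0 => id
  | t + 1 => wmap a f t ∘ cs.sref (cs.obj a f (t + 1)) (f (t + 1))

end CartanScheme

/-- A connected generalized root system of type a Cartan scheme, with the spaces `V^a`
written in the coordinates given by the bases `Π^a` (so `α^a_i` is `Pi.single i 1`). -/
structure GenRootSystem (I : Type*) [Fintype I] [DecidableEq I] (A : Type*)
    extends CartanScheme I A where
  R : A → Set (I → ℤ)
  R1 : ∀ a, R a = (R a ∩ {v | ∀ i, 0 ≤ v i}) ∪ (-(R a ∩ {v | ∀ i, 0 ≤ v i}))
  R2 : ∀ a i, R a ∩ (Set.range fun z : ℤ => z • (Pi.single i 1 : I → ℤ)) =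
        {Pi.single i 1, -Pi.single i 1}
  R3 : ∀ a i, toCartanScheme.sref a i '' R a = R (τ i a)
  R4 : ∀ a b, a = b ↔ ∃ (f : ℕ → I) (t : ℕ), toCartanScheme.obj a f t = b ∧
        ∀ i, toCartanScheme.wmap a f t (Pi.single i 1) = Pi.single i 1
  R5 : ∀ a b, ∃ (f : ℕ → I) (t : ℕ), toCartanScheme.obj a f t = b

namespace GenRootSystem

variable {I : Type*} [Fintype I] [DecidableEq I] {A : Type*} (rs : GenRootSystem I A)

/-- The positive roots `R^+(a)`. -/
def Rp (a : A) : Set (I → ℤ) := rs.R a ∩ {v | ∀ i, 0 ≤ v i}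

/-- `a_{f,t}` for the root system. -/
def obj (a : A) (f : ℕ → I) (t : ℕ) : A := rs.toCartanScheme.obj a f t

/-- `1^a s_{f,t}` for the root system. -/
def wmap (a : A) (f : ℕ → I) (t : ℕ) : (I → ℤ) → (I → ℤ) := rs.toCartanScheme.wmap a f t

end GenRootSystem

section Aux

variable {I : Type*} [Fintype I] [DecidableEq I] {A : Type*}

namespace CartanScheme

variable (cs : CartanScheme I A)

lemma sref_neg (a : A) (i : I) (v : I → ℤ) :
    cs.sref a i (-v) = -(cs.sref a i v) := by
  funext l
  simp only [sref, Pi.neg_apply, mul_neg, Finset.sum_neg_distrib]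
  split <;> ring

lemma sref_single (a : A) (i : I) :
    cs.sref a i (Pi.single i 1) = -(Pi.single i 1 : I → ℤ) := by
  funext l
  simp only [sref, Pi.neg_apply]
  by_cases h : l = i
  · subst h
    simp [Pi.single_apply, mul_ite, cs.c_diag]
  · simp [Pi.single_apply, h]

lemma wmap_neg (a : A) (f : ℕ → I) (t : ℕ) (v : I → ℤ) :
    cs.wmap a f t (-v) = -(cs.wmap a f t v) := by
  induction t generalizing v with
  | zero => rfl
  | succ t ih =>
    simp only [wmap, Function.comp_apply, cs.sref_neg]
    exact ih _

end CartanScheme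

namespace GenRootSystem

variable (rs : GenRootSystem I A)

lemma zero_not_mem_R (a : A) (i : I) : (0 : I → ℤ) ∉ rs.R a := by
  intro h0
  have hmem : (0 : I → ℤ) ∈ rs.R a ∩ (Set.range fun z : ℤ => z • (Pi.single i 1 : I → ℤ)) :=
    ⟨h0, ⟨0, by simp⟩⟩
  rw [rs.R2 a i] at hmem
  rcases hmem with h | h
  · have := congrFun h.symm i
    simp at this
  · have := congrFun h.symm i
    simp at this

/-- Key positivity lemma: if `v ∈ R⁺(a)` and `v ≠ α_i` then `s_i v ∈ R⁺(τ_i a)`. -/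
lemma sref_mem_Rp (a : A) (i : I) (v : I → ℤ) (hv : v ∈ rs.Rp a)
    (hne : v ≠ Pi.single i 1) :
    rs.toCartanScheme.sref a i v ∈ rs.Rp (rs.τ i a) := by
  obtain ⟨hvR, hvpos⟩ := hv
  have hmemR : rs.toCartanScheme.sref a i v ∈ rs.R (rs.τ i a) := by
    rw [← rs.R3 a i]; exact ⟨v, hvR, rfl⟩
  -- find a coordinate l ≠ i with v l > 0
  have hex : ∃ l, l ≠ i ∧ 0 < v l := by
    by_contra hcon
    push_neg at hcon
    have hzero : ∀ l, l ≠ i → v l = 0 := fun l hl => le_antisymm (hcon l hl) (hvpos l)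
    have hrange : v ∈ Set.range fun z : ℤ => z • (Pi.single i 1 : I → ℤ) := by
      refine ⟨v i, funext fun l => ?_⟩
      by_cases h : l = i
      · subst h; simp
      · simp [Pi.single_apply, h, hzero l h]
    have hmem : v ∈ rs.R a ∩ (Set.range fun z : ℤ => z • (Pi.single i 1 : I → ℤ)) :=
      ⟨hvR, hrange⟩
    rw [rs.R2 a i] at hmem
    rcases hmem with h | h
    · exact hne h
    · have := congrFun h i
      have h2 := hvpos i
      simp at this
      omega
  obtain ⟨l, hli, hlpos⟩ := hex
  -- sref doesn't change coordinate l
  have hcoord : rs.toCartanScheme.sref a i v l = v l := by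
    simp [CartanScheme.sref, hli]
  -- conclude positivity using R1
  have := rs.R1 (rs.τ i a)
  rw [this] at hmemR
  rcases hmemR with h | h
  · exact h
  · exfalso
    rw [Set.mem_neg] at h
    have := h.2 l
    simp only [Pi.neg_apply, hcoord] at this
    omega

/-- Main induction: positive roots sent to negatives by `1^a s_{f,t}` are among the `−β_s`. -/
lemma wmap_neg_of_mem (a : A) (f : ℕ → I) :
    ∀ t : ℕ, ∀ v ∈ rs.Rp (rs.obj a f t), rs.wmap a f t v ∈ -(rs.Rp a) →
      ∃ s : ℕ, 1 ≤ s ∧ s ≤ t ∧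
        rs.wmap a f t v = -(rs.wmap a f (s - 1) (Pi.single (f s) 1)) := by
  intro t
  induction t with
  | zero =>
    intro v hv hneg
    exfalso
    have hw : rs.wmap a f 0 v = v := rfl
    rw [hw, Set.mem_neg] at hneg
    have h1 := hv.2
    have h2 := hneg.2
    have hv0 : v = 0 := by
      funext l
      have := h1 l
      have := h2 l
      simp only [Pi.neg_apply, Pi.zero_apply] at *
      omega
    exact rs.zero_not_mem_R a (f 0) (hv0 ▸ hv.1)
  | succ t ih =>
    intro v hv hneg
    by_cases hvs : v = Pi.single (f (t + 1)) 1
    · refine ⟨t + 1, by omega, le_refl _, ?_⟩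
      subst hvs
      show rs.toCartanScheme.wmap a f (t + 1) _ = _
      simp only [CartanScheme.wmap, Function.comp_apply,
        rs.toCartanScheme.sref_single, rs.toCartanScheme.wmap_neg]
      rfl
    · -- v ≠ α_{f(t+1)}: use the positivity lemma and induction hypothesis
      have hobj : rs.τ (f (t + 1)) (rs.obj a f (t + 1)) = rs.obj a f t := by
        show rs.τ (f (t + 1)) (rs.toCartanScheme.obj a f (t + 1)) = _
        simp only [CartanScheme.obj]
        exact rs.τ_invol _ _
      have hmem : rs.toCartanScheme.sref (rs.obj a f (t + 1)) (f (t + 1)) v ∈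
          rs.Rp (rs.obj a f t) := by
        rw [← hobj]
        exact rs.sref_mem_Rp _ _ _ hv hvs
      have heq : rs.wmap a f (t + 1) v =
          rs.wmap a f t (rs.toCartanScheme.sref (rs.obj a f (t + 1)) (f (t + 1)) v) := rfl
      rw [heq] at hneg ⊢
      obtain ⟨s, hs1, hs2, hs3⟩ := ih _ hmem hneg
      exact ⟨s, hs1, by omega, hs3⟩

end GenRootSystem

end Aux

/-- Let `n := |R^+(a)| < ∞` and let `f` be a word realizing the longest element
`ω_0^{R,a}` of the Weyl groupoid ending at `a`, i.e. (by the length formula)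
`1^a s_{f,n}` maps `R^+(a_{f,n})` onto `−R^+(a)`.  Then
`R^+(a) = { 1^a s_{f,t-1}(α^{a_{f,t-1}}_{f(t)}) : 1 ≤ t ≤ n }`. -/
theorem longest_word_positive_roots {I : Type*} [Fintype I] [DecidableEq I] {A : Type*}
    (rs : GenRootSystem I A) (a : A) (n : ℕ)
    (hfin : (rs.Rp a).Finite) (hn : (rs.Rp a).ncard = n)
    (f : ℕ → I)
    (hlong : rs.wmap a f n '' rs.Rp (rs.obj a f n) = -(rs.Rp a)) :
    rs.Rp a = {v | ∃ t : ℕ, 1 ≤ t ∧ t ≤ n ∧ v = rs.wmap a f (t - 1) (Pi.single (f t) 1)} := by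
  set S : Set (I → ℤ) :=
    {v | ∃ t : ℕ, 1 ≤ t ∧ t ≤ n ∧ v = rs.wmap a f (t - 1) (Pi.single (f t) 1)} with hS
  have hSeq : S = (fun t => rs.wmap a f (t - 1) (Pi.single (f t) 1)) '' Set.Icc 1 n := by
    ext v
    simp only [hS, Set.mem_setOf_eq, Set.mem_image, Set.mem_Icc]
    constructor
    · rintro ⟨t, h1, h2, h3⟩; exact ⟨t, ⟨h1, h2⟩, h3.symm⟩
    · rintro ⟨t, ⟨h1, h2⟩, h3⟩; exact ⟨t, h1, h2, h3.symm⟩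
  have hSfin : S.Finite := by
    rw [hSeq]
    exact (Set.finite_Icc 1 n).image _
  have hsub : rs.Rp a ⊆ S := by
    intro u hu
    have hnegu : -u ∈ -(rs.Rp a) := Set.neg_mem_neg.mpr hu
    rw [← hlong] at hnegu
    obtain ⟨v, hv, hveq⟩ := hnegu
    have hvneg : rs.wmap a f n v ∈ -(rs.Rp a) := by
      rw [hveq]; exact Set.neg_mem_neg.mpr hu
    obtain ⟨s, hs1, hs2, hs3⟩ := rs.wmap_neg_of_mem a f n v hv hvneg
    rw [hveq] at hs3
    have : u = rs.wmap a f (s - 1) (Pi.single (f s) 1) := by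
      have := congrArg Neg.neg hs3
      simpa using this
    exact ⟨s, hs1, hs2, this⟩
  have hcard : S.ncard ≤ (rs.Rp a).ncard := by
    rw [hn, hSeq]
    calc ((fun t => rs.wmap a f (t - 1) (Pi.single (f t) 1)) '' Set.Icc 1 n).ncard
        ≤ (Set.Icc 1 n).ncard := Set.ncard_image_le (Set.finite_Icc 1 n)
      _ = n := by rw [Set.ncard_eq_toFinset_card']; simp
  exact Set.eq_of_subset_of_ncard_le hsub hcard hSfin
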